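/- arXiv:1801.05756 — 3 statements merged into one kernel-verified Lean document; each statement's English description precedes it below -/
import Mathlib

section
/- Let W ≥ 0 and h be independent real random variables on a probability space, where h has the Gamma(N,1) density x^{N−1} e^{−x}/(N−1)! on [0,∞) for a positive integer N, and let L(t) = E[e^{−tW}] be the Laplace transform of W. Then for every real c > 0, P(h > c·W) = ∑_{n=0}^{N−1} ((−c)^n / n!) · L^{(n)}(c), where L^{(n)} denotes the n-th iterated derivative of L. -/
/-!
Conditioning on `W`, independence gives `P(h > cW) = E[T(cW)]`, where for `h ~ Gamma(n+1, 1)`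
and `a ≥ 0` the tail is `T(a) = P(h > a) = e^{-a} ∑_{k ≤ n} a^k / k!` (`gammaTail n a`): its
derivative telescopes to minus the density. Since `e^{-cW} (cW)^k = (-c)^k (-W)^k e^{-cW}` and
differentiating under the integral gives `L^{(k)}(c) = E[(-W)^k e^{-cW}]` for `c > 0`, taking
expectations term by term yields the formula.
-/

open Real MeasureTheory ProbabilityTheory Filter Set Finset Topology
open scoped Nat

noncomputable def gammaTail (n : ℕ) (a : ℝ) : ℝ :=
  exp (-a) * ∑ k ∈ range (n + 1), a ^ k / k !

lemma gammaTail_succ (n : ℕ) (a : ℝ) :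
    gammaTail (n + 1) a = gammaTail n a + a ^ (n + 1) * exp (-a) / (n + 1)! := by
  rw [gammaTail, gammaTail, sum_range_succ]; ring

lemma hasDerivAt_gammaTail (n : ℕ) (x : ℝ) :
    HasDerivAt (gammaTail n) (-(x ^ n * exp (-x) / n !)) x := by
  induction n with
  | zero =>
    have h : gammaTail 0 = fun y => exp (-y) := funext fun y => by simp [gammaTail]
    simpa [h] using (hasDerivAt_neg x).exp
  | succ n ih =>
    rw [show gammaTail (n + 1) = _ from funext (gammaTail_succ n)]
    refine (ih.add (((hasDerivAt_pow (n + 1) x).fun_mul (hasDerivAt_neg x).exp).div_const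
      ((n + 1)! : ℝ))).congr_deriv ?_
    rw [Nat.factorial_succ]; push_cast; field_simp; ring

lemma tendsto_gammaTail_atTop (n : ℕ) : Tendsto (gammaTail n) atTop (𝓝 0) := by
  have h := tendsto_finsetSum (range (n + 1)) fun k _ =>
    (tendsto_pow_mul_exp_neg_atTop_nhds_zero k).div_const (k ! : ℝ)
  simp only [zero_div, sum_const_zero] at h
  refine h.congr fun y => ?_
  rw [gammaTail, mul_sum]; exact sum_congr rfl fun k _ => by ring

lemma gammaTail_nonneg (n : ℕ) {a : ℝ} (ha : 0 ≤ a) : 0 ≤ gammaTail n a := by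
  unfold gammaTail; positivity

lemma continuous_gammaTail (n : ℕ) : Continuous (gammaTail n) :=
  continuous_iff_continuousAt.2 fun x => (hasDerivAt_gammaTail n x).continuousAt

lemma gammaTail_mul_eq_sum (n : ℕ) (c w : ℝ) :
    gammaTail n (c * w) =
      ∑ k ∈ range (n + 1), (-c) ^ k / k ! * ((-w) ^ k * exp (-(c * w))) := by
  rw [gammaTail, mul_sum]
  refine sum_congr rfl fun k _ => ?_
  rw [← neg_mul_neg c w, mul_pow]
  ring

lemma hasDerivAt_neg_gammaTail (n : ℕ) (x : ℝ) :
    HasDerivAt (fun y => -gammaTail n y) (x ^ n * exp (-x) / n !) x := by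
  simpa using (hasDerivAt_gammaTail n x).fun_neg

lemma integrableOn_Ioi_pow_mul_exp_neg_div_factorial (n : ℕ) {a : ℝ} (ha : 0 ≤ a) :
    IntegrableOn (fun x => x ^ n * exp (-x) / n !) (Ioi a) :=
  integrableOn_Ioi_deriv_of_nonneg' (fun x _ => hasDerivAt_neg_gammaTail n x)
    (fun x hx => by have : 0 ≤ x := ha.trans hx.out.le; positivity)
    (tendsto_gammaTail_atTop n).neg

lemma integral_Ioi_pow_mul_exp_neg_div_factorial (n : ℕ) {a : ℝ} (ha : 0 ≤ a) :
    ∫ x in Ioi a, x ^ n * exp (-x) / n ! = gammaTail n a := by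
  rw [integral_Ioi_of_hasDerivAt_of_nonneg' (fun x _ => hasDerivAt_neg_gammaTail n x)
    (fun x hx => by have : 0 ≤ x := ha.trans hx.out.le; positivity)
    (tendsto_gammaTail_atTop n).neg]
  simp

lemma withDensity_gammaPDF_Ioi (n : ℕ) {a : ℝ} (ha : 0 ≤ a) :
    volume.withDensity (fun x => ENNReal.ofReal (if 0 ≤ x then x ^ n * exp (-x) / n ! else 0))
      (Ioi a) = ENNReal.ofReal (gammaTail n a) := by
  have hpos : ∀ x ∈ Ioi a, 0 ≤ x := fun x hx => ha.trans hx.out.le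
  rw [withDensity_apply _ measurableSet_Ioi,
    setLIntegral_congr_fun measurableSet_Ioi fun x hx => by rw [if_pos (hpos x hx)],
    ← ofReal_integral_eq_lintegral_ofReal (integrableOn_Ioi_pow_mul_exp_neg_div_factorial n ha)
      ((ae_restrict_iff' measurableSet_Ioi).2 (ae_of_all _ fun x hx => by
        have := hpos x hx; positivity)),
    integral_Ioi_pow_mul_exp_neg_div_factorial n ha]

lemma pow_mul_exp_neg_mul_le (n : ℕ) {a x : ℝ} (ha : 0 < a) (hx : 0 ≤ x) :
    x ^ n * exp (-(a * x)) ≤ n ! / a ^ n := by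
  have h := (div_le_iff₀ (by positivity)).1 (pow_div_factorial_le_exp (a * x) (by positivity) n)
  rw [le_div_iff₀ (by positivity)]
  calc x ^ n * exp (-(a * x)) * a ^ n = (a * x) ^ n * exp (-(a * x)) := by ring
    _ ≤ exp (a * x) * n ! * exp (-(a * x)) := by gcongr
    _ = n ! := by rw [exp_neg]; field_simp

section Laplace
variable {Ω : Type*} [MeasurableSpace Ω] {μ : Measure Ω} {W : Ω → ℝ}

lemma norm_neg_pow_mul_exp_neg_mul_le (n : ℕ) {s t : ℝ} (ht : 0 < t) (hts : t ≤ s) {w : ℝ}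
    (hw : 0 ≤ w) : ‖(-w) ^ n * exp (-(s * w))‖ ≤ n ! / t ^ n := by
  rw [norm_mul, norm_pow, norm_neg, Real.norm_of_nonneg hw, Real.norm_of_nonneg (exp_pos _).le]
  refine le_trans ?_ (pow_mul_exp_neg_mul_le n ht hw)
  gcongr

lemma integrable_neg_pow_mul_exp_neg_mul [IsFiniteMeasure μ] (hW : AEMeasurable W μ)
    (hWnn : ∀ᵐ ω ∂μ, 0 ≤ W ω) (n : ℕ) {t : ℝ} (ht : 0 < t) :
    Integrable (fun ω => (-W ω) ^ n * exp (-(t * W ω))) μ := by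
  refine Integrable.mono' (integrable_const ((n ! : ℝ) / t ^ n)) (by fun_prop) ?_
  filter_upwards [hWnn] with ω hω
  exact norm_neg_pow_mul_exp_neg_mul_le n ht le_rfl hω

lemma hasDerivAt_integral_neg_pow_mul_exp_neg_mul [IsFiniteMeasure μ] (hW : AEMeasurable W μ)
    (hWnn : ∀ᵐ ω ∂μ, 0 ≤ W ω) (n : ℕ) {t : ℝ} (ht : 0 < t) :
    HasDerivAt (fun s => ∫ ω, (-W ω) ^ n * exp (-(s * W ω)) ∂μ)
      (∫ ω, (-W ω) ^ (n + 1) * exp (-(t * W ω)) ∂μ) t := by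
  have ht2 : 0 < t / 2 := half_pos ht
  refine (hasDerivAt_integral_of_dominated_loc_of_deriv_le
    (F := fun s ω => (-W ω) ^ n * exp (-(s * W ω)))
    (F' := fun s ω => (-W ω) ^ (n + 1) * exp (-(s * W ω)))
    (bound := fun _ => ((n + 1) ! : ℝ) / (t / 2) ^ (n + 1)) (Metric.ball_mem_nhds t ht2)
    (Eventually.of_forall fun s => by fun_prop)
    (integrable_neg_pow_mul_exp_neg_mul hW hWnn n ht) (by fun_prop) ?_ (integrable_const _)
    (ae_of_all _ fun ω s _ => ?_)).2
  · filter_upwards [hWnn] with ω hω s hs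
    have hts : t / 2 ≤ s := by
      have := abs_lt.1 (mem_ball_iff_norm.1 hs); linarith
    exact norm_neg_pow_mul_exp_neg_mul_le (n + 1) ht2 hts hω
  · refine (((hasDerivAt_mul_const (W ω)).fun_neg.exp).const_mul ((-W ω) ^ n)).congr_deriv ?_
    ring

lemma iteratedDeriv_laplace [IsFiniteMeasure μ] (hW : AEMeasurable W μ)
    (hWnn : ∀ᵐ ω ∂μ, 0 ≤ W ω) (n : ℕ) {t : ℝ} (ht : 0 < t) :
    iteratedDeriv n (fun s => ∫ ω, exp (-(s * W ω)) ∂μ) t =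
      ∫ ω, (-W ω) ^ n * exp (-(t * W ω)) ∂μ := by
  induction n generalizing t with
  | zero => simp
  | succ n ih =>
    have heq : iteratedDeriv n (fun s => ∫ ω, exp (-(s * W ω)) ∂μ) =ᶠ[𝓝 t]
        fun s => ∫ ω, (-W ω) ^ n * exp (-(s * W ω)) ∂μ :=
      eventually_gt_nhds ht |>.mono fun s hs => ih hs
    rw [iteratedDeriv_succ, heq.deriv_eq]
    exact (hasDerivAt_integral_neg_pow_mul_exp_neg_mul hW hWnn n ht).deriv

end Laplace

lemma ProbabilityTheory.IndepFun.measure_lt_eq_lintegral {Ω : Type*} [MeasurableSpace Ω]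
    {P : Measure Ω} [IsFiniteMeasure P] {X Y : Ω → ℝ} (hX : AEMeasurable X P)
    (hY : AEMeasurable Y P) (hXY : IndepFun X Y P) :
    P {ω | X ω < Y ω} = ∫⁻ ω, P.map Y (Ioi (X ω)) ∂P := by
  have hs : MeasurableSet {p : ℝ × ℝ | p.1 < p.2} :=
    measurableSet_lt measurable_fst measurable_snd
  calc P {ω | X ω < Y ω} = P.map (fun ω => (X ω, Y ω)) {p | p.1 < p.2} :=
        (Measure.map_apply_of_aemeasurable (hX.prodMk hY) hs).symm
    _ = (P.map X).prod (P.map Y) {p | p.1 < p.2} := by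
        rw [(indepFun_iff_map_prod_eq_prod_map_map hX hY).1 hXY]
    _ = ∫⁻ ω, P.map Y (Ioi (X ω)) ∂P := by
        rw [Measure.prod_apply hs,
          lintegral_map' (measurable_measure_prodMk_left hs).aemeasurable hX]
        rfl

/-- The abstract multi-antenna conditional coverage probability formula
(eq. (A.4) of the paper): if `h` is Gamma(N,1) distributed and independent of
the nonnegative random variable `W`, and `L(t) = E[e^{-tW}]` is the Laplace
transform of `W`, then `P(h > cW) = ∑_{n=0}^{N-1} ((-c)^n / n!) L^{(n)}(c)`
for every `c > 0`. -/
theorem gamma_exceeds_scaled_laplace (Ω : Type*) [MeasurableSpace Ω] (P : Measure Ω)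
    [IsProbabilityMeasure P] (W h : Ω → ℝ) (hW : Measurable W) (hh : Measurable h)
    (hWnn : ∀ ω, 0 ≤ W ω) (hindep : IndepFun W h P)
    (N : ℕ) (hN : 0 < N)
    (hdens : P.map h = volume.withDensity (fun x =>
      ENNReal.ofReal
        (if 0 ≤ x then x ^ (N - 1) * Real.exp (-x) / (Nat.factorial (N - 1) : ℝ) else 0)))
    (L : ℝ → ℝ) (hL : ∀ t, L t = ∫ ω, Real.exp (-(t * W ω)) ∂P)
    (c : ℝ) (hc : 0 < c) :
    (P {ω | c * W ω < h ω}).toReal =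
      ∑ n ∈ Finset.range N, ((-c) ^ n / (Nat.factorial n : ℝ)) * iteratedDeriv n L c := by
  obtain ⟨n, rfl⟩ : ∃ n, N = n + 1 := ⟨N - 1, (Nat.succ_pred_eq_of_pos hN).symm⟩
  obtain rfl : L = fun t => ∫ ω, exp (-(t * W ω)) ∂P := funext hL
  rw [Nat.add_sub_cancel] at hdens
  have hcW : ∀ ω, 0 ≤ c * W ω := fun ω => mul_nonneg hc.le (hWnn ω)
  have hWnn' : ∀ᵐ ω ∂P, 0 ≤ W ω := ae_of_all _ hWnn
  calc (P {ω | c * W ω < h ω}).toReal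
      = (∫⁻ ω, ENNReal.ofReal (gammaTail n (c * W ω)) ∂P).toReal := by
        rw [(hindep.comp (measurable_const_mul c) measurable_id).measure_lt_eq_lintegral
          (hW.const_mul c).aemeasurable hh.aemeasurable]
        simp only [hdens, withDensity_gammaPDF_Ioi n (hcW _)]
    _ = ∫ ω, gammaTail n (c * W ω) ∂P :=
        (integral_eq_lintegral_of_nonneg_ae (ae_of_all _ fun ω => gammaTail_nonneg n (hcW ω))
          ((continuous_gammaTail n).measurable.comp (hW.const_mul c)).aestronglyMeasurable).symm
    _ = ∑ k ∈ range (n + 1), (-c) ^ k / k ! * ∫ ω, (-W ω) ^ k * exp (-(c * W ω)) ∂P := by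
        simp_rw [gammaTail_mul_eq_sum, ← integral_const_mul]
        exact integral_finsetSum _ fun k _ =>
          (integrable_neg_pow_mul_exp_neg_mul hW.aemeasurable hWnn' k hc).const_mul _
    _ = _ := by simp_rw [iteratedDeriv_laplace hW.aemeasurable hWnn' _ hc]
end

section
/- Fix real numbers γ > 0 with γ ≠ 1, J > 1, ℓ ≥ 1 and ϖ ∈ (0,1). Define f₁ : (0,1] → ℝ by f₁(ε) = [ (ℓ−1) ε^{1−γ} + (ε + (1−ε)/ϖ)^{1−γ} − ℓ ] / (J^{1−γ} − 1). Then f₁ is concave on (0,1]. -/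
open Real Set

/-! With `p = 1 - γ`, both terms of the numerator are `x ↦ x ^ p` evaluated at a positive affine
function of `ε`. The map `x ↦ x ^ p / p` is concave on `(0, ∞)` for every `p ≤ 1`, `p ≠ 0`,
since its derivative `x ^ (p - 1)` is antitone, and `J ^ p - 1` has the sign of `p`; so
`x ↦ x ^ p / (J ^ p - 1)` is a positive multiple of it. -/

lemma concaveOn_rpow_div_self {p : ℝ} (hp : p ≤ 1) (hp0 : p ≠ 0) :
    ConcaveOn ℝ (Ioi 0) fun x : ℝ => x ^ p / p := by
  have hderiv : ∀ x ∈ Ioi (0 : ℝ), HasDerivAt (fun x : ℝ => x ^ p / p) (x ^ (p - 1)) x :=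
    fun x hx => by
      simpa [mul_div_cancel_left₀ _ hp0] using
        (hasDerivAt_rpow_const (p := p) (Or.inl (ne_of_gt hx))).div_const p
  refine AntitoneOn.concaveOn_of_deriv (convex_Ioi 0)
    (fun x hx => (hderiv x hx).continuousAt.continuousWithinAt) ?_ ?_ <;> rw [interior_Ioi]
  · exact fun x hx => (hderiv x hx).differentiableAt.differentiableWithinAt
  · intro x hx y hy hxy
    rw [(hderiv x hx).deriv, (hderiv y hy).deriv]
    exact rpow_le_rpow_of_nonpos hx hxy (by linarith)

lemma div_rpow_sub_one_pos {J p : ℝ} (hJ : 1 < J) (hp0 : p ≠ 0) : 0 < p / (J ^ p - 1) := by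
  rcases hp0.lt_or_gt with hp | hp
  · exact div_pos_of_neg_of_neg hp (sub_neg.2 (rpow_lt_one_of_one_lt_of_neg hJ hp))
  · exact div_pos hp (sub_pos.2 (one_lt_rpow hJ hp))

lemma concaveOn_rpow_div_rpow_sub_one {J p : ℝ} (hJ : 1 < J) (hp : p ≤ 1) (hp0 : p ≠ 0) :
    ConcaveOn ℝ (Ioi 0) fun x : ℝ => x ^ p / (J ^ p - 1) := by
  refine ((concaveOn_rpow_div_self hp hp0).smul (div_rpow_sub_one_pos hJ hp0).le).congr
    fun x _ => ?_
  simp only [smul_eq_mul]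
  field_simp

lemma ConcaveOn.comp_lineMap {𝕜 E β : Type*} [Field 𝕜] [LinearOrder 𝕜] [IsStrictOrderedRing 𝕜]
    [AddCommGroup E] [Module 𝕜 E] [AddCommMonoid β] [PartialOrder β] [SMul 𝕜 β]
    {s : Set E} {f : E → β} (hf : ConcaveOn 𝕜 s f) {a b : E} (ha : a ∈ s) (hb : b ∈ s) :
    ConcaveOn 𝕜 (Icc (0 : 𝕜) 1) (f ∘ AffineMap.lineMap a b) :=
  (hf.comp_affineMap _).subset (fun _ ht => hf.1.lineMap_mem ha hb ht) (convex_Icc 0 1)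

lemma lineMap_inv_one_eq {ϖ : ℝ} (hϖ : ϖ ≠ 0) (ε : ℝ) :
    AffineMap.lineMap ϖ⁻¹ (1 : ℝ) ε = ε + (1 - ε) / ϖ := by
  rw [AffineMap.lineMap_apply_ring']
  field_simp
  ring

/-- Concavity of the two-stair caching objective (Appendix C of the paper):
for `γ > 0`, `γ ≠ 1`, `J > 1`, `ℓ ≥ 1` and `ϖ ∈ (0,1)`, the function
`f₁(ε) = [(ℓ-1) ε^{1-γ} + (ε + (1-ε)/ϖ)^{1-γ} - ℓ]/(J^{1-γ} - 1)` is concave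
on `(0,1]`. -/
theorem two_stair_objective_concave (γ J ℓ ϖ : ℝ) (hγ : 0 < γ) (hγ1 : γ ≠ 1)
    (hJ : 1 < J) (hℓ : 1 ≤ ℓ) (hϖ : ϖ ∈ Set.Ioo (0 : ℝ) 1) :
    ConcaveOn ℝ (Set.Ioc (0 : ℝ) 1)
      (fun ε : ℝ =>
        ((ℓ - 1) * ε ^ (1 - γ) + (ε + (1 - ε) / ϖ) ^ (1 - γ) - ℓ) /
          (J ^ (1 - γ) - 1)) := by
  have hg := concaveOn_rpow_div_rpow_sub_one hJ (by linarith : 1 - γ ≤ 1)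
    (sub_ne_zero.2 hγ1.symm)
  have hdirect := (hg.subset Ioc_subset_Ioi_self (convex_Ioc 0 1)).smul (sub_nonneg.2 hℓ)
  have hmixed : ConcaveOn ℝ (Ioc 0 1)
      fun ε : ℝ => (ε + (1 - ε) / ϖ) ^ (1 - γ) / (J ^ (1 - γ) - 1) :=
    ((hg.comp_lineMap (inv_pos.2 hϖ.1) (mem_Ioi.2 one_pos)).subset Ioc_subset_Icc_self
      (convex_Ioc 0 1)).congr fun ε _ => by
        simp only [Function.comp_apply, lineMap_inv_one_eq hϖ.1.ne']
  refine ((hdirect.add hmixed).add_const (-ℓ / (J ^ (1 - γ) - 1))).congr fun ε _ => ?_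
  simp only [Pi.add_apply, smul_eq_mul]
  ring
end

section
/- Fix real numbers γ > 0 with γ ≠ 1, J > 1, ℓ > 1 and ϖ ∈ (0,1) with ϖ ≤ 1/ℓ. Define ε_o = ( (((ℓ−1)/(ϖ^{−1}−1))^{−1/γ} − 1)·ϖ + 1 )^{−1} and f₁ : (0,1] → ℝ by f₁(ε) = [ (ℓ−1) ε^{1−γ} + (ε + (1−ε)/ϖ)^{1−γ} − ℓ ] / (J^{1−γ} − 1). Then ε_o ∈ (0,1] and the derivative of f₁ vanishes at ε_o, i.e., f₁′(ε_o) = 0. -/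
/-!
Put `t = ((ℓ - 1) / (ϖ⁻¹ - 1)) ^ (-1/γ)`. The point `ε_o = ((t - 1) ϖ + 1)⁻¹` is exactly
the one where `ε + (1 - ε)/ϖ = t ε`. Since `f₁'(ε)` is proportional to
`(ℓ - 1) ε^(-γ) - (ϖ⁻¹ - 1) (ε + (1 - ε)/ϖ)^(-γ)`, it vanishes at `ε_o` because
`t^(-γ) = (ℓ - 1)/(ϖ⁻¹ - 1)`. The hypothesis `ϖ ≤ 1/ℓ` makes this ratio at most `1`, so
`t ≥ 1` and `ε_o ∈ (0, 1]`.
-/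

open Real Set

lemma inv_sub_one_mul_add_one_mem_Ioc {t ϖ : ℝ} (ht : 1 ≤ t) (hϖ : 0 ≤ ϖ) :
    ((t - 1) * ϖ + 1)⁻¹ ∈ Ioc (0 : ℝ) 1 := by
  have hd : 1 ≤ (t - 1) * ϖ + 1 := by nlinarith
  exact ⟨inv_pos.2 (by linarith), inv_le_one_of_one_le₀ hd⟩

lemma inv_sub_one_mul_add_one_add_one_sub_div {t ϖ : ℝ} (hϖ : ϖ ≠ 0)
    (hd : (t - 1) * ϖ + 1 ≠ 0) :
    ((t - 1) * ϖ + 1)⁻¹ + (1 - ((t - 1) * ϖ + 1)⁻¹) / ϖ = t * ((t - 1) * ϖ + 1)⁻¹ := by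
  field_simp
  ring

lemma div_inv_sub_one_le_one {ℓ ϖ : ℝ} (hℓ : 0 < ℓ) (hϖ : ϖ ∈ Ioo (0 : ℝ) 1)
    (hϖℓ : ϖ ≤ 1 / ℓ) : (ℓ - 1) / (ϖ⁻¹ - 1) ≤ 1 := by
  have hc : 0 < ϖ⁻¹ - 1 := sub_pos.2 ((one_lt_inv₀ hϖ.1).2 hϖ.2)
  have hℓϖ : ℓ ≤ ϖ⁻¹ := (le_inv_comm₀ hℓ hϖ.1).2 (by rwa [one_div] at hϖℓ)
  rw [div_le_one hc]
  linarith

lemma mul_mul_rpow_neg_of_div {a c γ ε : ℝ} (ha : 0 ≤ a) (hc : 0 < c) (hγ : γ ≠ 0)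
    (hε : 0 ≤ ε) : c * ((a / c) ^ (-(1 / γ)) * ε) ^ (-γ) = a * ε ^ (-γ) := by
  have hac : 0 ≤ a / c := div_nonneg ha hc.le
  have hinv : ((a / c) ^ (-(1 / γ))) ^ (-γ) = a / c := by
    simpa only [inv_neg, one_div, inv_inv] using
      rpow_rpow_inv hac (neg_ne_zero.2 (one_div_ne_zero hγ))
  rw [mul_rpow (rpow_nonneg hac _) hε, hinv, ← mul_assoc, mul_div_cancel₀ a hc.ne']

lemma hasDerivAt_mul_rpow_add_rpow_add_one_sub_div (a q ϖ : ℝ) {ε : ℝ} (hε : 0 < ε)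
    (hg : 0 < ε + (1 - ε) / ϖ) :
    HasDerivAt (fun x : ℝ => a * x ^ q + (x + (1 - x) / ϖ) ^ q)
      (q * (a * ε ^ (q - 1) - (ϖ⁻¹ - 1) * (ε + (1 - ε) / ϖ) ^ (q - 1))) ε := by
  have hpow : HasDerivAt (fun x : ℝ => x ^ q) (q * ε ^ (q - 1)) ε :=
    hasDerivAt_rpow_const (Or.inl hε.ne')
  have hlin : HasDerivAt (fun x : ℝ => x + (1 - x) / ϖ) (1 + (0 - 1) / ϖ) ε :=
    (hasDerivAt_id ε).add (((hasDerivAt_const ε 1).sub (hasDerivAt_id ε)).div_const ϖ)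
  exact ((hpow.const_mul a).add (hlin.rpow_const (p := q) (Or.inl hg.ne'))).congr_deriv (by ring)

theorem two_stair_stationary_point_general (γ J ℓ ϖ : ℝ) (hγ : 0 < γ)
    (hℓ : 1 < ℓ) (hϖ : ϖ ∈ Set.Ioo (0 : ℝ) 1) (hϖℓ : ϖ ≤ 1 / ℓ) :
    ((((ℓ - 1) / (ϖ⁻¹ - 1)) ^ (-(1 / γ)) - 1) * ϖ + 1)⁻¹ ∈ Set.Ioc (0 : ℝ) 1 ∧
      deriv
        (fun ε : ℝ =>
          ((ℓ - 1) * ε ^ (1 - γ) + (ε + (1 - ε) / ϖ) ^ (1 - γ) - ℓ) /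
            (J ^ (1 - γ) - 1))
        ((((ℓ - 1) / (ϖ⁻¹ - 1)) ^ (-(1 / γ)) - 1) * ϖ + 1)⁻¹ = 0 := by
  have hc : 0 < ϖ⁻¹ - 1 := sub_pos.2 ((one_lt_inv₀ hϖ.1).2 hϖ.2)
  have ht : 1 ≤ ((ℓ - 1) / (ϖ⁻¹ - 1)) ^ (-(1 / γ)) :=
    one_le_rpow_of_pos_of_le_one_of_nonpos (div_pos (by linarith) hc)
      (div_inv_sub_one_le_one (by linarith) hϖ hϖℓ) (by simp [hγ.le])
  have hmem := inv_sub_one_mul_add_one_mem_Ioc ht hϖ.1.le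
  refine ⟨hmem, ?_⟩
  have hg := inv_sub_one_mul_add_one_add_one_sub_div
    (t := ((ℓ - 1) / (ϖ⁻¹ - 1)) ^ (-(1 / γ))) hϖ.1.ne' (mt inv_eq_zero.2 hmem.1.ne')
  have hderiv := ((hasDerivAt_mul_rpow_add_rpow_add_one_sub_div (ℓ - 1) (1 - γ) ϖ hmem.1
    (hg ▸ mul_pos (by linarith) hmem.1)).sub_const ℓ).div_const (J ^ (1 - γ) - 1)
  rw [hderiv.deriv, hg, show (1 : ℝ) - γ - 1 = -γ by ring,
    mul_mul_rpow_neg_of_div (by linarith) hc hγ.ne' hmem.1.le, sub_self, mul_zero, zero_div]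

/-- The stationary point (C.3) in the proof of Theorem 3 of the paper:
for `γ > 0`, `γ ≠ 1`, `J > 1`, `ℓ > 1` and `ϖ ∈ (0,1)` with `ϖ ≤ 1/ℓ`, the
point `ε_o = ((((ℓ-1)/(ϖ⁻¹-1))^{-1/γ} - 1) ϖ + 1)⁻¹` lies in `(0,1]` and the
derivative of the two-stair objective `f₁` vanishes at `ε_o`. -/
theorem two_stair_stationary_point (γ J ℓ ϖ : ℝ) (hγ : 0 < γ) (hγ1 : γ ≠ 1)
    (hJ : 1 < J) (hℓ : 1 < ℓ) (hϖ : ϖ ∈ Set.Ioo (0 : ℝ) 1) (hϖℓ : ϖ ≤ 1 / ℓ) :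
    ((((ℓ - 1) / (ϖ⁻¹ - 1)) ^ (-(1 / γ)) - 1) * ϖ + 1)⁻¹ ∈ Set.Ioc (0 : ℝ) 1 ∧
      deriv
        (fun ε : ℝ =>
          ((ℓ - 1) * ε ^ (1 - γ) + (ε + (1 - ε) / ϖ) ^ (1 - γ) - ℓ) /
            (J ^ (1 - γ) - 1))
        ((((ℓ - 1) / (ϖ⁻¹ - 1)) ^ (-(1 / γ)) - 1) * ϖ + 1)⁻¹ = 0 :=
  two_stair_stationary_point_general γ J ℓ ϖ hγ hℓ hϖ hϖℓ
end
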